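/- Strong duality for entropy-regularized linear programming over the simplex: for a finite set Y, θ : Y → ℝ, and a single linear equality constraint A·p = c (with A : Y → ℝ, c ∈ ℝ, feasible), the maximum of ∑_y p(y)θ(y) + H(p) over probability distributions satisfying the constraint equals the minimum over λ ∈ ℝ of log(∑_y exp(θ(y) − λ·A(y))) + λ·c, provided the constraint set contains a strictly positive distribution. -/

import Mathlib

/-!
The Lagrange dual of the entropy-regularised problem is
`D(λ) = log ∑ exp (θ - λ A) + λ c`. Weak duality is the Gibbs variational inequality
`∑ p g + H(p) ≤ log ∑ exp g`, applied to `g = θ - λ A`. Conversely, strict feasibility forces `A`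
to take values on both sides of `c` (unless `A ≡ c`), which makes `D` coercive; at a minimiser
`λ*` the derivative `c - 𝔼_q A` vanishes, so the Gibbs distribution `q ∝ exp (θ - λ* A)` is
feasible and attains `D(λ*)`.
-/

open Real Finset Filter

section Gibbs

variable {Y : Type*} [Fintype Y]

/-- Fenchel–Young inequality for the conjugate pair `x log x - x` and `exp`. -/
lemma mul_sub_mul_log_le_exp_sub {p : ℝ} (hp : 0 ≤ p) (a : ℝ) :
    p * a - p * log p ≤ exp a - p := by
  rcases hp.eq_or_lt with rfl | hp
  · simpa using (exp_pos a).le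
  have h := add_one_le_exp (a - log p)
  rw [exp_sub, exp_log hp] at h
  have h' := mul_le_mul_of_nonneg_left h hp.le
  rw [mul_div_cancel₀ _ hp.ne'] at h'
  linarith

lemma sum_mul_sub_sum_mul_log_le_log_sum_exp [Nonempty Y] (p g : Y → ℝ)
    (hp : ∀ y, 0 ≤ p y) (hs : ∑ y, p y = 1) :
    ∑ y, p y * g y - ∑ y, p y * log (p y) ≤ log (∑ y, exp (g y)) := by
  have hZ : 0 < ∑ y, exp (g y) := sum_pos (fun _ _ => exp_pos _) univ_nonempty
  set Z := ∑ y, exp (g y) with hZ_def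
  calc ∑ y, p y * g y - ∑ y, p y * log (p y)
      = ∑ y, (p y * (g y - log Z) - p y * log (p y)) + (∑ y, p y) * log Z := by
        simp only [mul_sub, sum_sub_distrib, sum_mul]; ring
    _ ≤ ∑ y, (exp (g y - log Z) - p y) + (∑ y, p y) * log Z :=
        (add_le_add_iff_right _).2 (sum_le_sum fun y _ => mul_sub_mul_log_le_exp_sub (hp y) _)
    _ = log Z := by
        simp only [sum_sub_distrib, exp_sub, exp_log hZ, ← sum_div, ← hZ_def, div_self hZ.ne',
          hs]
        ring

end Gibbs

section Duality

variable {Y : Type*} [Fintype Y] (θ A : Y → ℝ) (c : ℝ)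

noncomputable def primalObjective (p : Y → ℝ) : ℝ :=
  (∑ y, p y * θ y) + (-∑ y, p y * log (p y))

noncomputable def partitionFn (l : ℝ) : ℝ :=
  ∑ y, exp (θ y - l * A y)

noncomputable def dualObjective (l : ℝ) : ℝ :=
  log (partitionFn θ A l) + l * c

noncomputable def gibbsDist (l : ℝ) (y : Y) : ℝ :=
  exp (θ y - l * A y) / partitionFn θ A l

lemma eq_of_sum_mul_eq_of_forall_le {p : Y → ℝ} (hp : ∀ y, 0 < p y) (hs : ∑ y, p y = 1)
    (hc : ∑ y, A y * p y = c) (hle : ∀ y, c ≤ A y) (y : Y) : A y = c := by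
  have hzero : ∑ y, (A y - c) * p y = 0 := by
    simp only [sub_mul, sum_sub_distrib, ← mul_sum, hs, hc, mul_one, sub_self]
  have hy := (sum_eq_zero_iff_of_nonneg fun y _ =>
    mul_nonneg (sub_nonneg.2 (hle y)) (hp y).le).1 hzero y (mem_univ y)
  exact sub_eq_zero.1 ((mul_eq_zero.1 hy).resolve_right (hp y).ne')

variable [Nonempty Y]

lemma partitionFn_pos (l : ℝ) : 0 < partitionFn θ A l :=
  sum_pos (fun _ _ => exp_pos _) univ_nonempty

lemma gibbsDist_pos (l : ℝ) (y : Y) : 0 < gibbsDist θ A l y :=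
  div_pos (exp_pos _) (partitionFn_pos θ A l)

lemma sum_gibbsDist (l : ℝ) : ∑ y, gibbsDist θ A l y = 1 := by
  simp only [gibbsDist, ← sum_div]
  exact div_self (partitionFn_pos θ A l).ne'

lemma primalObjective_le_dualObjective {p : Y → ℝ} (hp : ∀ y, 0 ≤ p y)
    (hs : ∑ y, p y = 1) (hc : ∑ y, A y * p y = c) (l : ℝ) :
    primalObjective θ p ≤ dualObjective θ A c l := by
  have h := sum_mul_sub_sum_mul_log_le_log_sum_exp p (fun y => θ y - l * A y) hp hs
  have hlin : ∑ y, p y * (θ y - l * A y) = ∑ y, p y * θ y - l * c := by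
    rw [← hc, mul_sum, ← sum_sub_distrib]
    exact sum_congr rfl fun y _ => by ring
  rw [hlin] at h
  rw [primalObjective, dualObjective, partitionFn]
  linarith

lemma primalObjective_gibbsDist (l : ℝ) :
    primalObjective θ (gibbsDist θ A l) =
      dualObjective θ A (∑ y, A y * gibbsDist θ A l y) l := by
  have hlog (y : Y) : log (gibbsDist θ A l y) = θ y - l * A y - log (partitionFn θ A l) := by
    rw [gibbsDist, log_div (exp_ne_zero _) (partitionFn_pos θ A l).ne', log_exp]
  simp only [primalObjective, dualObjective, hlog, mul_sub, sum_sub_distrib, ← sum_mul,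
    sum_gibbsDist, mul_sum]
  simp only [mul_left_comm (gibbsDist θ A l _) l, mul_comm (gibbsDist θ A l _) (A _)]
  ring

lemma hasDerivAt_dualObjective (l : ℝ) :
    HasDerivAt (dualObjective θ A c) (c - ∑ y, A y * gibbsDist θ A l y) l := by
  have hZ : HasDerivAt (partitionFn θ A) (∑ y, -A y * exp (θ y - l * A y)) l := by
    unfold partitionFn
    refine HasDerivAt.fun_sum fun y _ => ?_
    simpa [mul_comm] using (((hasDerivAt_mul_const (A y)).const_sub (θ y)).exp)
  refine ((hZ.log (partitionFn_pos θ A l).ne').fun_add (hasDerivAt_mul_const c)).congr_deriv ?_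
  simp only [gibbsDist, mul_div_assoc', ← sum_div, neg_mul, sum_neg_distrib]
  ring

lemma continuous_dualObjective : Continuous (dualObjective θ A c) :=
  continuous_iff_continuousAt.2 fun l => (hasDerivAt_dualObjective θ A c l).continuousAt

lemma add_mul_sub_le_dualObjective (y : Y) (l : ℝ) :
    θ y + l * (c - A y) ≤ dualObjective θ A c l := by
  have h : exp (θ y - l * A y) ≤ partitionFn θ A l :=
    single_le_sum (f := fun z => exp (θ z - l * A z)) (fun z _ => (exp_pos _).le) (mem_univ y)
  have h' := (le_log_iff_exp_le (partitionFn_pos θ A l)).2 h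
  rw [dualObjective]
  linarith

lemma tendsto_dualObjective_cocompact {y₁ y₂ : Y} (h₁ : A y₁ < c) (h₂ : c < A y₂) :
    Tendsto (dualObjective θ A c) (cocompact ℝ) atTop := by
  rw [cocompact_eq_atBot_atTop]
  refine tendsto_sup.2 ⟨?_, ?_⟩
  · refine tendsto_atTop_mono (add_mul_sub_le_dualObjective θ A c y₂) ?_
    exact tendsto_atTop_add_const_left _ _ (tendsto_id.atBot_mul_const_of_neg (by linarith))
  · refine tendsto_atTop_mono (add_mul_sub_le_dualObjective θ A c y₁) ?_
    exact tendsto_atTop_add_const_left _ _ (tendsto_id.atTop_mul_const (by linarith))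

lemma exists_sum_mul_gibbsDist_eq {p : Y → ℝ} (hp : ∀ y, 0 < p y) (hs : ∑ y, p y = 1)
    (hc : ∑ y, A y * p y = c) : ∃ l, ∑ y, A y * gibbsDist θ A l y = c := by
  by_cases hconst : ∀ y, A y = c
  · exact ⟨0, by simp only [hconst, ← mul_sum, sum_gibbsDist, mul_one]⟩
  obtain ⟨y₀, hy₀⟩ := not_forall.1 hconst
  obtain ⟨y₁, h₁⟩ : ∃ y, A y < c := by
    by_contra! h
    exact hy₀ (eq_of_sum_mul_eq_of_forall_le A c hp hs hc h y₀)
  obtain ⟨y₂, h₂⟩ : ∃ y, c < A y := by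
    by_contra! h
    have hc' : ∑ y, -A y * p y = -c := by simp only [neg_mul, sum_neg_distrib, hc]
    exact hy₀ (neg_inj.1 (eq_of_sum_mul_eq_of_forall_le (-A) (-c) hp hs hc'
      (fun y => neg_le_neg (h y)) y₀))
  obtain ⟨l, hl⟩ := (continuous_dualObjective θ A c).exists_forall_le
    (tendsto_dualObjective_cocompact θ A c h₁ h₂)
  have hmin : IsLocalMin (dualObjective θ A c) l := Eventually.of_forall hl
  have hstat := hmin.hasDerivAt_eq_zero (hasDerivAt_dualObjective θ A c l)
  exact ⟨l, by linarith⟩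

end Duality

theorem entropy_lp_strong_duality
    (Y : Type*) [Fintype Y] [Nonempty Y] (θ : Y → ℝ) (A : Y → ℝ) (c : ℝ)
    (hfeas : ∃ p : Y → ℝ, (∀ y, 0 < p y) ∧ (∑ y, p y) = 1 ∧
      (∑ y, A y * p y) = c) :
    ∃ v : ℝ,
      IsGreatest
        {u : ℝ | ∃ p : Y → ℝ, (∀ y, 0 ≤ p y) ∧ (∑ y, p y) = 1 ∧
          (∑ y, A y * p y) = c ∧
          u = (∑ y, p y * θ y) + (-∑ y, p y * Real.log (p y))} v ∧
      IsLeast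
        {u : ℝ | ∃ lam : ℝ,
          u = Real.log (∑ y, Real.exp (θ y - lam * A y)) + lam * c} v := by
  obtain ⟨p, hp, hs, hc⟩ := hfeas
  obtain ⟨l, hl⟩ := exists_sum_mul_gibbsDist_eq θ A c hp hs hc
  have hq_nonneg y := (gibbsDist_pos θ A l y).le
  have hq_opt := primalObjective_gibbsDist θ A l
  rw [hl] at hq_opt
  refine ⟨dualObjective θ A c l,
    ⟨⟨gibbsDist θ A l, hq_nonneg, sum_gibbsDist θ A l, hl, hq_opt.symm⟩, ?_⟩, ⟨l, rfl⟩, ?_⟩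
  · rintro _ ⟨p, hp, hs, hc, rfl⟩
    exact primalObjective_le_dualObjective θ A c hp hs hc l
  · rintro _ ⟨l', rfl⟩
    exact hq_opt ▸ primalObjective_le_dualObjective θ A c hq_nonneg (sum_gibbsDist θ A l) hl l'
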